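/- Let F be the free group on x_1, …, x_{n-1}, m_1, …, m_g, l_1, …, l_g and let k ≥ 2. Suppose φ is an automorphism of F/F_{k+2} such that φ(x_i) = α_i⁻¹ x_i α_i, φ(m_j) ≡ m_j β_j mod F_{k+2}, φ(l_j) ≡ l_j γ_j mod F_{k+2}, with α_i, β_j, γ_j ∈ F_k (viewed mod F_{k+2}). If φ fixes the class of ∂ = ∏_i x_i ∏_j [m_j, l_j] in F/F_{k+2}, then ∏_i [x_i, α_i] · ∏_j [m_j, γ_j][β_j, l_j] = 1 in F_{k+1}/F_{k+2}. -/

import Mathlib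

/-!
Work in `Q = F/F_{k+2}`. Since `α_i, β_j, γ_j ∈ F_k`, we have `φ(x_i) = x_i [x_i, α_i]` and,
up to terms in `F_{k+2}`, `φ([m_j, l_j]) = [m_j, l_j] [m_j, γ_j] [β_j, l_j]`; all the correction
terms lie in `F_{k+1}`, whose image in `Q` is central. Hence `φ(∂) = ∂ · E` with `E` the product in
question, and `φ(∂) = ∂` forces `E = 1` in `Q`.
-/

/-- `lcs G k` is the `k`-th term `G_k` of the lower central series, 1-indexed:
`G_1 = G`, `G_{k+1} = [G, G_k]`. -/
def lcs (G : Type*) [Group G] (k : ℕ) : Subgroup G := (⊤ : Subgroup G).lowerCentralSeries (k - 1)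

instance lcs_normal (G : Type*) [Group G] (k : ℕ) : (lcs G k).Normal :=
  Subgroup.lowerCentralSeries_normal ⊤ (k - 1)

lemma lcs_antitone {G : Type*} [Group G] {k l : ℕ} (h : k ≤ l) : lcs G l ≤ lcs G k :=
  (⊤ : Subgroup G).lowerCentralSeries_antitone (Nat.sub_le_sub_right h 1)

/-- The natural projection `G/G_l → G/G_k` for `k ≤ l`. -/
def lcsProj (G : Type*) [Group G] (l k : ℕ) (h : k ≤ l) :
    G ⧸ lcs G l →* G ⧸ lcs G k :=
  QuotientGroup.map _ _ (MonoidHom.id G) (fun _ hx => lcs_antitone h hx)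
/-- The commutator used in the paper: `[x,y] = x⁻¹y⁻¹xy`. -/
def pcomm {G : Type*} [Group G] (x y : G) : G := x⁻¹ * y⁻¹ * x * y

/-- The free group on `x_1,…,x_{n-1}, m_1,…,m_g, l_1,…,l_g`. -/
abbrev FG (n g : ℕ) := FreeGroup (Fin (n - 1) ⊕ (Fin g ⊕ Fin g))

def xgen {n g : ℕ} (i : Fin (n - 1)) : FG n g := FreeGroup.of (Sum.inl i)
def mgen {n g : ℕ} (j : Fin g) : FG n g := FreeGroup.of (Sum.inr (Sum.inl j))
def lgen {n g : ℕ} (j : Fin g) : FG n g := FreeGroup.of (Sum.inr (Sum.inr j))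

/-- The boundary word `∂ = x_1 ⋯ x_{n-1} [m_1,l_1] ⋯ [m_g,l_g]`. -/
def bdry (n g : ℕ) : FG n g :=
  ((List.finRange (n - 1)).map (fun i => xgen i)).prod *
  ((List.finRange g).map (fun j => pcomm (mgen j) (lgen j))).prod

open Subgroup

namespace Subgroup

variable {G : Type*} [Group G]

theorem commutator_commutator_le_of_rotate {H₁ H₂ H₃ N : Subgroup G} [N.Normal]
    (h1 : ⁅⁅H₂, H₃⁆, H₁⁆ ≤ N) (h2 : ⁅⁅H₃, H₁⁆, H₂⁆ ≤ N) : ⁅⁅H₁, H₂⁆, H₃⁆ ≤ N := by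
  simp only [← QuotientGroup.ker_mk' N, ← map_eq_bot_iff, map_commutator] at h1 h2 ⊢
  exact commutator_commutator_eq_bot_of_rotate h1 h2

theorem commutator_lowerCentralSeries_le (i j : ℕ) :
    ⁅(⊤ : Subgroup G).lowerCentralSeries i, (⊤ : Subgroup G).lowerCentralSeries j⁆ ≤
      (⊤ : Subgroup G).lowerCentralSeries (i + j + 1) := by
  induction j generalizing i with
  | zero => exact le_rfl
  | succ j ih =>
    rw [lowerCentralSeries_succ, commutator_comm]
    apply commutator_commutator_le_of_rotate
    · rw [commutator_comm ⊤]
      exact (ih (i + 1)).trans_eq (by ring_nf)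
    · exact commutator_mono (ih i) le_rfl

end Subgroup

section LowerCentralSeries

open scoped commutatorElement

variable {G : Type*} [Group G]

theorem mem_lcs_one (a : G) : a ∈ lcs G 1 := mem_top a

theorem commutator_lcs_le (i j : ℕ) : ⁅lcs G i, lcs G j⁆ ≤ lcs G (i + j) :=
  (commutator_lowerCentralSeries_le _ _).trans (Subgroup.lowerCentralSeries_antitone _ (by omega))

theorem pcomm_eq_commutatorElement (a b : G) : pcomm a b = ⁅a⁻¹, b⁻¹⁆ := by
  simp [pcomm, commutatorElement_def]

theorem pcomm_mem_lcs {a b : G} {i j : ℕ} (ha : a ∈ lcs G i) (hb : b ∈ lcs G j) :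
    pcomm a b ∈ lcs G (i + j) := by
  rw [pcomm_eq_commutatorElement]
  exact commutator_lcs_le i j (commutator_mem_commutator (inv_mem ha) (inv_mem hb))

theorem map_pcomm {H F : Type*} [Group H] [FunLike F G H] [MonoidHomClass F G H] (f : F) (a b : G) :
    f (pcomm a b) = pcomm (f a) (f b) := by
  simp [pcomm]

theorem mk_pcomm {N : Subgroup G} [N.Normal] (a b : G) :
    ((pcomm a b : G) : G ⧸ N) = pcomm (a : G ⧸ N) b :=
  map_pcomm (QuotientGroup.mk' N) a b

theorem pcomm_eq_iff {a b t : G} : pcomm a b = t ↔ a * b = b * a * t := by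
  rw [pcomm, show a⁻¹ * b⁻¹ * a * b = (b * a)⁻¹ * (a * b) by group, inv_mul_eq_iff_eq_mul, eq_comm]

theorem commute_mk_of_mem_lcs {a b : G} {c i j : ℕ} (ha : a ∈ lcs G i) (hb : b ∈ lcs G j)
    (h : c ≤ i + j) : Commute (a : G ⧸ lcs G c) (b : G ⧸ lcs G c) := by
  have hba : pcomm b a ∈ lcs G c := lcs_antitone (by omega) (pcomm_mem_lcs hb ha)
  rw [commute_iff_eq, ← QuotientGroup.mk_mul, ← QuotientGroup.mk_mul, QuotientGroup.eq]
  simpa [pcomm, mul_assoc] using hba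

theorem mk_mem_center_of_mem_lcs {a : G} {c i : ℕ} (ha : a ∈ lcs G i) (h : c ≤ i + 1) :
    (a : G ⧸ lcs G c) ∈ center (G ⧸ lcs G c) := by
  rw [mem_center_iff]
  intro q
  induction q using QuotientGroup.induction_on with
  | H b => exact (commute_mk_of_mem_lcs (mem_lcs_one b) ha (by omega)).eq

end LowerCentralSeries

section Commutators

variable {G : Type*} [Group G]

theorem pcomm_mul_mul {M L β γ : G} (hMγ : pcomm M γ ∈ center G) (hβL : pcomm β L ∈ center G)
    (hβγ : Commute β γ) (hβ : Commute (pcomm M L) β) (hγ : Commute (pcomm M L) γ) :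
    pcomm (M * β) (L * γ) = pcomm M L * (pcomm M γ * pcomm β L) := by
  set c := pcomm M L
  set z := pcomm M γ
  set w := pcomm β L
  have hz (x : G) : Commute z x := (mem_center_iff.mp hMγ x).symm
  have hML : M * L = L * M * c := pcomm_eq_iff.mp rfl
  have hMγ' : M * γ = γ * M * z := pcomm_eq_iff.mp rfl
  have hβL' : β * L = L * β * w := pcomm_eq_iff.mp rfl
  rw [pcomm_eq_iff]
  calc M * β * (L * γ) = M * (β * L) * γ := by group
    _ = M * L * (β * γ) * w := by rw [hβL']; simp only [mul_assoc, (mem_center_iff.mp hβL γ).symm]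
    _ = L * M * (β * γ) * c * w := by rw [hML]; simp only [mul_assoc, hβ.left_comm, hγ.left_comm]
    _ = L * (M * γ) * β * c * w := by rw [hβγ.eq]; group
    _ = L * γ * (M * β) * (c * (z * w)) := by
      rw [hMγ']; simp only [mul_assoc, (hz β).left_comm, (hz c).left_comm]

theorem mul_mul_mul_comm_of_mem_center {b : G} (hb : b ∈ center G) (a c d : G) :
    a * b * (c * d) = a * c * (b * d) := by
  rw [mul_assoc, ← mul_assoc b, ← mem_center_iff.mp hb c]
  simp only [mul_assoc]

theorem List.prod_map_mul_of_mem_center {ι : Type*} (l : List ι) (f z : ι → G)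
    (hz : ∀ i, z i ∈ center G) :
    (l.map fun i => f i * z i).prod = (l.map f).prod * (l.map z).prod := by
  induction l with
  | nil => simp
  | cons a t ih =>
    simp only [List.map_cons, List.prod_cons, ih, mul_assoc]
    rw [← mul_assoc (z a), ← mem_center_iff.mp (hz a), mul_assoc]

end Commutators

section Quotient

variable {G : Type*} [Group G] {k : ℕ}

theorem mk_conj_eq_mul_mk_pcomm {N : Subgroup G} [N.Normal] (x a : G) :
    ((a⁻¹ * x * a : G) : G ⧸ N) = (x : G ⧸ N) * ((pcomm x a : G) : G ⧸ N) := by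
  rw [← QuotientGroup.mk_mul, pcomm]
  group

theorem pcomm_mk_mul_mul (hk : 2 ≤ k) (M L : G) {β γ : G} (hβ : β ∈ lcs G k)
    (hγ : γ ∈ lcs G k) :
    pcomm ((M * β : G) : G ⧸ lcs G (k + 2)) ((L * γ : G) : G ⧸ lcs G (k + 2)) =
      pcomm (M : G ⧸ lcs G (k + 2)) (L : G ⧸ lcs G (k + 2)) *
        ((pcomm M γ * pcomm β L : G) : G ⧸ lcs G (k + 2)) := by
  have hML : pcomm M L ∈ lcs G (1 + 1) := pcomm_mem_lcs (mem_lcs_one M) (mem_lcs_one L)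
  rw [QuotientGroup.mk_mul, QuotientGroup.mk_mul, QuotientGroup.mk_mul, mk_pcomm, mk_pcomm]
  -- `2 ≤ k` is what puts `[β, γ] ∈ F_{2k}` and `[[M, L], β], [[M, L], γ] ∈ F_{k+2}`.
  refine pcomm_mul_mul ?_ ?_ (commute_mk_of_mem_lcs hβ hγ (by omega)) ?_ ?_
  · rw [← mk_pcomm]
    exact mk_mem_center_of_mem_lcs (pcomm_mem_lcs (mem_lcs_one M) hγ) (by omega)
  · rw [← mk_pcomm]
    exact mk_mem_center_of_mem_lcs (pcomm_mem_lcs hβ (mem_lcs_one L)) (by omega)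
  · rw [← mk_pcomm]
    exact commute_mk_of_mem_lcs hML hβ (by omega)
  · rw [← mk_pcomm]
    exact commute_mk_of_mem_lcs hML hγ (by omega)

end Quotient

section Boundary

variable {n g : ℕ} {Q : Type*} [Group Q]

theorem map_bdry (f : FG n g →* Q) :
    f (bdry n g) = ((List.finRange (n - 1)).map fun i => f (xgen i)).prod *
      ((List.finRange g).map fun j => pcomm (f (mgen j)) (f (lgen j))).prod := by
  simp only [bdry, map_mul, map_list_prod, List.map_map, Function.comp_def, map_pcomm]

theorem map_bdry_eq_mul_of_mem_center (π ψ : FG n g →* Q) (z : Fin (n - 1) → Q) (w : Fin g → Q)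
    (hz : ∀ i, z i ∈ center Q) (hw : ∀ j, w j ∈ center Q)
    (hx : ∀ i, ψ (xgen i) = π (xgen i) * z i)
    (hml : ∀ j, pcomm (ψ (mgen j)) (ψ (lgen j)) = pcomm (π (mgen j)) (π (lgen j)) * w j) :
    ψ (bdry n g) =
      π (bdry n g) * (((List.finRange (n - 1)).map z).prod * ((List.finRange g).map w).prod) := by
  have hZ : ((List.finRange (n - 1)).map z).prod ∈ center Q :=
    list_prod_mem (by simpa using fun i => hz i)
  simp only [map_bdry, hx, hml, List.prod_map_mul_of_mem_center _ _ _ hz,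
    List.prod_map_mul_of_mem_center _ _ _ hw]
  exact mul_mul_mul_comm_of_mem_center hZ _ _ _

end Boundary

/-- If an automorphism `φ` of `F/F_{k+2}` (`k ≥ 2`) satisfies
`φ(x_i) = α_i⁻¹ x_i α_i`, `φ(m_j) = m_j β_j`, `φ(l_j) = l_j γ_j` with
`α_i, β_j, γ_j ∈ F_k`, and `φ` fixes the class of `∂ = ∏ x_i ∏ [m_j,l_j]`, then
`∏ᵢ [x_i, α_i] ∏ⱼ [m_j, γ_j][β_j, l_j] = 1` in `F_{k+1}/F_{k+2}`. -/
theorem stmt13 (n g k : ℕ) (hk : 2 ≤ k)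
    (α : Fin (n - 1) → FG n g) (β γ : Fin g → FG n g)
    (hα : ∀ i, α i ∈ lcs (FG n g) k) (hβ : ∀ j, β j ∈ lcs (FG n g) k)
    (hγ : ∀ j, γ j ∈ lcs (FG n g) k)
    (φ : (FG n g ⧸ lcs (FG n g) (k + 2)) ≃* (FG n g ⧸ lcs (FG n g) (k + 2)))
    (hx : ∀ i, φ (QuotientGroup.mk (xgen i)) =
      QuotientGroup.mk ((α i)⁻¹ * xgen i * α i))
    (hm : ∀ j, φ (QuotientGroup.mk (mgen j)) = QuotientGroup.mk (mgen j * β j))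
    (hl : ∀ j, φ (QuotientGroup.mk (lgen j)) = QuotientGroup.mk (lgen j * γ j))
    (hbd : φ (QuotientGroup.mk (bdry n g)) = QuotientGroup.mk (bdry n g)) :
    ((List.finRange (n - 1)).map (fun i => pcomm (xgen i) (α i))).prod *
      ((List.finRange g).map (fun j => pcomm (mgen j) (γ j) * pcomm (β j) (lgen j))).prod
      ∈ lcs (FG n g) (k + 2) := by
  have hφπ := map_bdry_eq_mul_of_mem_center (QuotientGroup.mk' _)
    (φ.toMonoidHom.comp (QuotientGroup.mk' _))
    (fun i => QuotientGroup.mk (pcomm (xgen i) (α i)))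
    (fun j => QuotientGroup.mk (pcomm (mgen j) (γ j) * pcomm (β j) (lgen j)))
    (fun i => mk_mem_center_of_mem_lcs (pcomm_mem_lcs (mem_lcs_one _) (hα i)) (by omega))
    (fun j => mk_mem_center_of_mem_lcs (mul_mem (pcomm_mem_lcs (mem_lcs_one _) (hγ j))
      (lcs_antitone (by omega) (pcomm_mem_lcs (hβ j) (mem_lcs_one _)))) (by omega))
    (fun i => (hx i).trans (mk_conj_eq_mul_mk_pcomm _ _))
    (fun j => by
      simp only [MonoidHom.comp_apply, MulEquiv.coe_toMonoidHom, QuotientGroup.mk'_apply, hm, hl]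
      exact pcomm_mk_mul_mul hk _ _ (hβ j) (hγ j))
  simp only [MonoidHom.comp_apply, MulEquiv.coe_toMonoidHom, QuotientGroup.mk'_apply, hbd,
    left_eq_mul] at hφπ
  rw [← QuotientGroup.ker_mk' (lcs (FG n g) (k + 2)), MonoidHom.mem_ker, map_mul, map_list_prod,
    map_list_prod, List.map_map, List.map_map]
  exact hφπ
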